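/- arXiv:0802.1387 — 2 statements merged into one kernel-verified Lean document; each statement's English description precedes it below -/
import Mathlib

section
/- For every i ∈ {1,...,m} and ℓ ∈ {1,...,m}, the conditional probability P(X_1 = i < X_2 < X_3 < ... < X_ℓ | X_1 = i) equals C(m-i, ℓ-1)/(m-1)^{ℓ-1} if m - i ≥ ℓ - 1, and equals 0 otherwise. -/
/-!
Given `X 1 = i`, the ascending run of length `ℓ` is the disjoint union of the cylinders
`{(X 1, …, X ℓ) = v}` over strictly increasing `v` with `v 0 = i`. Since a strictly increasing path
never repeats a state, each such path inside `{1, …, m}` has probability `(1/m) (1/(m-1))^(ℓ-1)`,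
every other path has probability zero, and the admissible paths correspond to the
`(ℓ-1)`-subsets of `{i+1, …, m}`. Dividing by `P(X 1 = i) = 1/m` gives the formula.
-/

open MeasureTheory
open scoped ENNReal

/-- Conditional probability P(A | B) as a real number. -/
noncomputable def condP {Ω : Type*} [MeasurableSpace Ω] (μ : MeasureTheory.Measure Ω)
    (A B : Set Ω) : ℝ := (μ (A ∩ B)).toReal / (μ B).toReal

open Finset

section StrictMonoCount
variable {α : Type*} [LinearOrder α]

open scoped Classical in
theorem card_strictMono_piFinset (s : Finset α) (k : ℕ) :
    #{v ∈ Fintype.piFinset fun _ : Fin k => s | StrictMono v} = (#s).choose k := by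
  rw [← card_powersetCard]
  symm
  refine card_bij (fun t ht => t.orderEmbOfFin (mem_powersetCard.1 ht).2) ?_ ?_ ?_
  · intro t ht
    simp only [mem_filter, Fintype.mem_piFinset]
    exact ⟨fun j => (mem_powersetCard.1 ht).1 (orderEmbOfFin_mem _ _ j),
      (orderEmbOfFin _ _).strictMono⟩
  · intro t _ u _ h
    simpa [range_orderEmbOfFin] using congrArg Set.range h
  · intro v hv
    simp only [mem_filter, Fintype.mem_piFinset] at hv
    refine ⟨univ.image v, mem_powersetCard.2 ⟨?_, ?_⟩, ?_⟩
    · exact image_subset_iff.2 fun j _ => hv.1 j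
    · rw [card_image_of_injective _ hv.2.injective, card_fin]
    · exact (orderEmbOfFin_unique _ (fun j => mem_image_of_mem v (mem_univ j)) hv.2).symm

open scoped Classical in
theorem card_strictMono_piFinset_apply_zero {s : Finset α} {a : α} (ha : a ∈ s) (n : ℕ) :
    #{v ∈ Fintype.piFinset fun _ : Fin (n + 1) => s | StrictMono v ∧ v 0 = a} =
      (#{x ∈ s | a < x}).choose n := by
  rw [← card_strictMono_piFinset]
  refine card_nbij' Fin.tail (fun u => Fin.cons a u) ?_ ?_ ?_ ?_
  · intro v hv
    simp only [coe_filter, Fintype.mem_piFinset, Set.mem_ofPred_eq, mem_filter] at hv ⊢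
    obtain ⟨hvs, hv, rfl⟩ := hv
    exact ⟨fun j => ⟨hvs _, hv j.succ_pos⟩, hv.comp Fin.strictMono_succ⟩
  · intro u hu
    simp only [coe_filter, Fintype.mem_piFinset, Set.mem_ofPred_eq, mem_filter] at hu ⊢
    exact ⟨Fin.cases ha fun j => (hu.1 j).1,
      Fin.strictMono_cons.2 ⟨fun j => (hu.1 j).2, hu.2⟩, rfl⟩
  · intro v hv
    simp only [coe_filter, Set.mem_ofPred_eq] at hv
    exact hv.2.2 ▸ Fin.cons_self_tail v
  · intro u _
    exact Fin.tail_cons _ _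

end StrictMonoCount

section UniformJumpChain
variable {Ω : Type*}

def initialPath (X : ℕ → Ω → ℕ) (n : ℕ) (ω : Ω) : Fin n → ℕ :=
  fun j => X (j + 1) ω

theorem ascending_inter_eq_preimage_initialPath (X : ℕ → Ω → ℕ) (n i : ℕ) :
    {ω | ∀ k, 1 ≤ k → k < n + 1 → X k ω < X (k + 1) ω} ∩ {ω | X 1 ω = i} =
      initialPath X (n + 1) ⁻¹' {v | StrictMono v ∧ v 0 = i} := by
  ext ω
  simp only [Set.mem_inter_iff, Set.mem_preimage, Set.mem_ofPred_eq, Fin.strictMono_iff_lt_succ,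
    initialPath, Fin.val_castSucc, Fin.val_succ, Fin.val_zero, zero_add, Fin.forall_iff]
  refine and_congr_left fun _ => ⟨fun h j hj => h _ le_add_self (by omega), fun h k hk1 hk => ?_⟩
  obtain ⟨j, rfl⟩ := Nat.exists_eq_add_of_le' hk1
  exact h j (by omega)

variable [MeasurableSpace Ω]

/-- The finite-dimensional laws of the chain started uniformly on `{1, …, m}` that always jumps to
a uniformly chosen *different* state. -/
def IsUniformJumpChain (μ : Measure Ω) (m : ℕ) (X : ℕ → Ω → ℕ) : Prop :=
  ∀ n, 1 ≤ n → ∀ f : ℕ → ℕ,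
    μ {ω | ∀ k, 1 ≤ k → k ≤ n → X k ω = f k} =
      (if f 1 ∈ Finset.Icc 1 m then (1 : ℝ≥0∞) / m else 0) *
        ∏ k ∈ Finset.Icc 1 (n - 1),
          (if f (k + 1) ∈ Finset.Icc 1 m ∧ f (k + 1) ≠ f k then (1 : ℝ≥0∞) / (m - 1) else 0)

variable {μ : Measure Ω} {m : ℕ} {X : ℕ → Ω → ℕ}

theorem measurable_initialPath (hX : ∀ k, Measurable (X k)) (n : ℕ) :
    Measurable (initialPath X n) :=
  measurable_pi_lambda _ fun _ => hX _

theorem IsUniformJumpChain.measure_initialPath_preimage_singleton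
    (hLaw : IsUniformJumpChain μ m X) {n : ℕ} (v : Fin (n + 1) → ℕ) :
    μ (initialPath X (n + 1) ⁻¹' {v}) =
      (if v 0 ∈ Icc 1 m then (1 : ℝ≥0∞) / m else 0) *
        ∏ j : Fin n,
          if v j.succ ∈ Icc 1 m ∧ v j.succ ≠ v j.castSucc then (1 : ℝ≥0∞) / (m - 1) else 0 := by
  have hinj : Function.Injective fun j : Fin (n + 1) => (j : ℕ) + 1 :=
    fun a b h => Fin.ext (by simpa using h)
  set f : ℕ → ℕ := Function.extend (fun j : Fin (n + 1) => (j : ℕ) + 1) v 0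
  have hf : ∀ j : Fin (n + 1), f (j + 1) = v j := hinj.extend_apply v 0
  have hcyl :
      initialPath X (n + 1) ⁻¹' {v} = {ω | ∀ k, 1 ≤ k → k ≤ n + 1 → X k ω = f k} := by
    ext ω
    simp only [Set.mem_preimage, Set.mem_singleton_iff, funext_iff, initialPath,
      Set.mem_ofPred_eq]
    refine ⟨fun h k hk1 hkn => ?_, fun h j => by rw [h _ le_add_self (by omega), hf]⟩
    obtain ⟨j, rfl⟩ : ∃ j : Fin (n + 1), (j : ℕ) + 1 = k :=
      ⟨⟨k - 1, by omega⟩, Nat.sub_add_cancel hk1⟩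
    rw [h, hf]
  have hsucc (j : Fin n) : f (1 + j + 1) = v j.succ := by rw [← hf, Fin.val_succ, add_comm 1]
  have hcast (j : Fin n) : f (1 + j) = v j.castSucc := by rw [← hf, Fin.val_castSucc, add_comm]
  rw [hcyl, hLaw (n + 1) le_add_self f, Nat.add_sub_cancel, ← Ico_add_one_right_eq_Icc 1 n,
    prod_Ico_eq_prod_range, Nat.add_sub_cancel, ← Fin.prod_univ_eq_prod_range]
  simp only [hsucc, hcast, show f 1 = v 0 from hf 0]

theorem IsUniformJumpChain.measure_initialPath_preimage_singleton_of_strictMono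
    (hLaw : IsUniformJumpChain μ m X) {n : ℕ} {v : Fin (n + 1) → ℕ} (hv : StrictMono v) :
    μ (initialPath X (n + 1) ⁻¹' {v}) =
      if v ∈ Fintype.piFinset fun _ => Icc 1 m then (1 : ℝ≥0∞) / m * (1 / (m - 1)) ^ n
      else 0 := by
  rw [hLaw.measure_initialPath_preimage_singleton]
  by_cases hbox : ∀ j, v j ∈ Icc 1 m
  · rw [if_pos (Fintype.mem_piFinset.2 hbox)]
    simp [hbox, fun j : Fin n => (hv j.castSucc_lt_succ).ne']
  · rw [if_neg (mt Fintype.mem_piFinset.1 hbox)]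
    obtain ⟨j, hj⟩ := not_forall.1 hbox
    cases j using Fin.cases with
    | zero => rw [if_neg hj, zero_mul]
    | succ j =>
      exact mul_eq_zero_of_right _ (prod_eq_zero (mem_univ j) (if_neg fun h => hj h.1))

theorem IsUniformJumpChain.measure_ascending_inter (hLaw : IsUniformJumpChain μ m X)
    (hX : ∀ k, Measurable (X k)) {i : ℕ} (hi : i ∈ Icc 1 m) (n : ℕ) :
    μ ({ω | ∀ k, 1 ≤ k → k < n + 1 → X k ω < X (k + 1) ω} ∩ {ω | X 1 ω = i}) =
      (m - i).choose n * ((1 : ℝ≥0∞) / m * (1 / (m - 1)) ^ n) := by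
  classical
  set F := {v ∈ Fintype.piFinset fun _ : Fin (n + 1) => Icc 1 m | StrictMono v ∧ v 0 = i}
  have hFsub : (F : Set (Fin (n + 1) → ℕ)) ⊆ {v | StrictMono v ∧ v 0 = i} :=
    fun v hv => (mem_filter.1 hv).2
  have hweight : ∀ v ∈ {v : Fin (n + 1) → ℕ | StrictMono v ∧ v 0 = i},
      μ (initialPath X (n + 1) ⁻¹' {v}) =
        if v ∈ F then (1 : ℝ≥0∞) / m * (1 / (m - 1)) ^ n else 0 := by
    intro v hv
    rw [hLaw.measure_initialPath_preimage_singleton_of_strictMono hv.1]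
    simp [F, hv.1, hv.2]
  have hnull : μ (initialPath X (n + 1) ⁻¹' ({v | StrictMono v ∧ v 0 = i} \ F)) = 0 := by
    rw [measure_preimage_eq_zero_iff_of_countable (Set.to_countable _)]
    rintro v ⟨hv, hvF⟩
    rw [hweight v hv, if_neg (mt mem_coe.2 hvF)]
  have hcard : #F = (m - i).choose n := by
    have : {x ∈ Icc 1 m | i < x} = Ioc i m := by
      ext x; simp only [mem_filter, mem_Icc, mem_Ioc]; omega
    rw [card_strictMono_piFinset_apply_zero hi, this, Nat.card_Ioc]
  rw [ascending_inter_eq_preimage_initialPath,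
    ← measure_eq_measure_of_null_sdiff (Set.preimage_mono hFsub) (by rwa [← Set.preimage_sdiff]),
    ← sum_measure_preimage_singleton F fun v _ =>
      measurable_initialPath hX _ (measurableSet_singleton v),
    sum_congr rfl fun v hv => (hweight v (hFsub hv)).trans (if_pos hv), sum_const, nsmul_eq_mul,
    hcard]

end UniformJumpChain

theorem psi_formula_general {Ω : Type*} [MeasurableSpace Ω] (μ : Measure Ω)
    (m : ℕ) (X : ℕ → Ω → ℕ)
    (hX : ∀ k, Measurable (X k))
    (hLaw : ∀ n, 1 ≤ n → ∀ f : ℕ → ℕ,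
      μ {ω | ∀ k, 1 ≤ k → k ≤ n → X k ω = f k} =
        (if f 1 ∈ Finset.Icc 1 m then (1 : ℝ≥0∞) / m else 0) *
          ∏ k ∈ Finset.Icc 1 (n - 1),
            (if f (k + 1) ∈ Finset.Icc 1 m ∧ f (k + 1) ≠ f k then (1 : ℝ≥0∞) / (m - 1) else 0))
    (i ℓ : ℕ) (hi : i ∈ Finset.Icc 1 m) :
    condP μ {ω | ∀ k, 1 ≤ k → k < ℓ → X k ω < X (k + 1) ω} {ω | X 1 ω = i} =
      if ℓ - 1 ≤ m - i
        then (((m - i).choose (ℓ - 1) : ℕ) : ℝ) / ((m - 1 : ℕ) : ℝ) ^ (ℓ - 1)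
        else 0 := by
  have hchain : IsUniformJumpChain μ m X := hLaw
  have hrun : {ω | ∀ k, 1 ≤ k → k < ℓ → X k ω < X (k + 1) ω} =
      {ω | ∀ k, 1 ≤ k → k < ℓ - 1 + 1 → X k ω < X (k + 1) ω} := by
    ext ω
    exact forall_congr' fun k => imp_congr_right fun hk => imp_congr_left (by omega)
  have hstart : μ {ω | X 1 ω = i} = 1 / m := by
    have hvacuous : {ω | ∀ k, 1 ≤ k → k < 0 + 1 → X k ω < X (k + 1) ω} = Set.univ :=
      Set.eq_univ_of_forall fun ω k hk1 hk => absurd hk (by omega)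
    simpa only [hvacuous, Set.univ_inter, Nat.choose_zero_right, Nat.cast_one, pow_zero, mul_one,
      one_mul] using hchain.measure_ascending_inter hX hi 0
  have hm : (m : ℝ) ≠ 0 := Nat.cast_ne_zero.2 (by have := mem_Icc.1 hi; omega)
  rw [condP, hrun, hchain.measure_ascending_inter hX hi, hstart,
    ite_eq_left_iff.2 fun h => by
      rw [Nat.choose_eq_zero_of_lt (not_le.1 h), Nat.cast_zero, zero_div],
    show (m : ℝ≥0∞) - 1 = ((m - 1 : ℕ) : ℝ≥0∞) by rw [ENNReal.natCast_sub, Nat.cast_one]]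
  simp only [ENNReal.toReal_mul, ENNReal.toReal_pow, ENNReal.toReal_div, ENNReal.toReal_one,
    ENNReal.toReal_natCast]
  field_simp
  rw [one_div_pow, mul_one_div]

/-- For i, ℓ ∈ {1,...,m},
P(X_1 = i < X_2 < ... < X_ℓ | X_1 = i) = C(m-i, ℓ-1)/(m-1)^{ℓ-1} if m-i ≥ ℓ-1,
and 0 otherwise. -/
theorem psi_formula {Ω : Type*} [MeasurableSpace Ω] (μ : Measure Ω)
    [IsProbabilityMeasure μ] (m : ℕ) (hm : 2 ≤ m) (X : ℕ → Ω → ℕ)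
    (hX : ∀ k, Measurable (X k))
    (hLaw : ∀ n, 1 ≤ n → ∀ f : ℕ → ℕ,
      μ {ω | ∀ k, 1 ≤ k → k ≤ n → X k ω = f k} =
        (if f 1 ∈ Finset.Icc 1 m then (1 : ℝ≥0∞) / m else 0) *
          ∏ k ∈ Finset.Icc 1 (n - 1),
            (if f (k + 1) ∈ Finset.Icc 1 m ∧ f (k + 1) ≠ f k then (1 : ℝ≥0∞) / (m - 1) else 0))
    (i ℓ : ℕ) (hi : i ∈ Finset.Icc 1 m) (hℓ : ℓ ∈ Finset.Icc 1 m) :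
    condP μ {ω | ∀ k, 1 ≤ k → k < ℓ → X k ω < X (k + 1) ω} {ω | X 1 ω = i} =
      if ℓ - 1 ≤ m - i
        then (((m - i).choose (ℓ - 1) : ℕ) : ℝ) / ((m - 1 : ℕ) : ℝ) ^ (ℓ - 1)
        else 0 :=
  psi_formula_general μ m X hX hLaw i ℓ hi
end

section
/- For 2 ≤ r ≤ m, the hitting time T_r of an ascending run of length at least r satisfies: P(T_r ≤ n | X_1 = i) = 0 for 1 ≤ n ≤ r−1, and for n ≥ r, P(T_r ≤ n | X_1 = i) = ψ_r(i) + ∑_{ℓ=1}^{r-1} ∑_{j=1}^m Φ_ℓ(i,j) · P(T_r ≤ n−ℓ | X_1 = j). -/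
/-!
First-step analysis on the first ascending run. Almost surely the chain stays in `{1, …, m}` and
never repeats a value, so either `X₁ < ⋯ < X_r`, which has probability `ψ_r(i)` (choose the
`r - 1` values above `i`), or the first run ends with a descent at some time `ℓ < r`. A run of
length `r` cannot straddle that descent, so `T_r ≤ n` becomes `T_r ≤ n - ℓ` for the chain started
afresh at time `ℓ + 1`, and the Markov property at time `ℓ + 1` factors its probability as
`Φ_ℓ(i, j) · P(T_r ≤ n - ℓ | X₁ = j)`.

All probabilities are computed from the cylinder weights: an event determined by the first `n`
steps is a countable disjoint union of cylinders.
-/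

open MeasureTheory
open scoped ENNReal

/-- The event {T_r ≤ n}: some ascending run of length at least r is completed by
time n, i.e. there is k with r ≤ k ≤ n and X_{k-r+1} < ... < X_k. -/
def hitEvent {Ω : Type*} (X : ℕ → Ω → ℕ) (r n : ℕ) : Set Ω :=
  {ω | ∃ k, r ≤ k ∧ k ≤ n ∧ ∀ s, k - r + 1 ≤ s → s < k → X s ω < X (s + 1) ω}

open Finset

namespace AscendingRuns

/-! Paths are functions `ℕ → ℕ` whose values at the times `1, 2, …` are read; the value at `0`
plays no role. -/

section Paths

def IsAscendingUpTo (t : ℕ) (f : ℕ → ℕ) : Prop :=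
  ∀ k, 1 ≤ k → k < t → f k < f (k + 1)

def HasRunBy (r n : ℕ) (f : ℕ → ℕ) : Prop :=
  ∃ k, r ≤ k ∧ k ≤ n ∧ ∀ s, k - r + 1 ≤ s → s < k → f s < f (s + 1)

def HasFirstRunLength (ℓ : ℕ) (f : ℕ → ℕ) : Prop :=
  IsAscendingUpTo ℓ f ∧ f (ℓ + 1) < f ℓ

variable {f : ℕ → ℕ} {r n ℓ : ℕ}

lemma IsAscendingUpTo.hasRunBy (hf : IsAscendingUpTo r f) (hrn : r ≤ n) : HasRunBy r n f :=
  ⟨r, le_rfl, hrn, fun s hs hsr => hf s (by omega) hsr⟩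

lemma isAscendingUpTo_add_two_iff {t : ℕ} :
    IsAscendingUpTo (t + 2) f ↔ f 1 < f 2 ∧ IsAscendingUpTo (t + 1) (fun k => f (k + 1)) := by
  refine ⟨fun h => ⟨h 1 le_rfl (by omega), fun k hk hkt => h (k + 1) (by omega) (by omega)⟩,
    fun ⟨h12, h⟩ k hk hkt => ?_⟩
  rcases (show k = 1 ∨ 2 ≤ k by omega) with rfl | hk2
  · exact h12
  · simpa [Nat.sub_add_cancel (show 1 ≤ k by omega)] using h (k - 1) (by omega) (by omega)

lemma HasFirstRunLength.not_isAscendingUpTo (hf : HasFirstRunLength ℓ f) (hℓ : 1 ≤ ℓ)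
    (hℓr : ℓ < r) : ¬ IsAscendingUpTo r f :=
  fun hasc => (hasc ℓ hℓ hℓr).asymm hf.2

lemma HasFirstRunLength.eq {ℓ' : ℕ} (hf : HasFirstRunLength ℓ f) (hf' : HasFirstRunLength ℓ' f)
    (hℓ : 1 ≤ ℓ) (hℓ' : 1 ≤ ℓ') : ℓ = ℓ' := by
  rcases lt_trichotomy ℓ ℓ' with h | h | h
  · exact absurd (hf'.1 ℓ hℓ h) hf.2.asymm
  · exact h
  · exact absurd (hf.1 ℓ' hℓ' h) hf'.2.asymm

/-- A run of length `r > ℓ` cannot straddle the descent at `ℓ`, so it lies after it. -/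
lemma HasFirstRunLength.hasRunBy_iff (hf : HasFirstRunLength ℓ f) (hℓr : ℓ < r) :
    HasRunBy r n f ↔ HasRunBy r (n - ℓ) (fun k => f (k + ℓ)) := by
  constructor
  · rintro ⟨k, hrk, hkn, hrun⟩
    have hk : ℓ + r ≤ k := by
      by_contra! hk
      exact (hrun ℓ (by omega) (by omega)).asymm hf.2
    refine ⟨k - ℓ, by omega, by omega, fun s hs hsk => ?_⟩
    simpa only [add_right_comm s 1 ℓ] using hrun (s + ℓ) (by omega) (by omega)
  · rintro ⟨k, hrk, hkn, hrun⟩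
    refine ⟨k + ℓ, by omega, by omega, fun s hs hsk => ?_⟩
    simpa only [Nat.sub_add_cancel (show ℓ ≤ s by omega), add_right_comm _ 1 ℓ] using
      hrun (s - ℓ) (by omega) (by omega)

lemma exists_hasFirstRunLength (hne : ∀ k, 1 ≤ k → k < r → f (k + 1) ≠ f k)
    (hasc : ¬ IsAscendingUpTo r f) : ∃ ℓ ∈ Icc 1 (r - 1), HasFirstRunLength ℓ f := by
  have hex : ∃ k, 1 ≤ k ∧ k < r ∧ ¬ f k < f (k + 1) := by
    simpa [IsAscendingUpTo] using hasc
  obtain ⟨h1, hr, hdesc⟩ := Nat.find_spec hex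
  refine ⟨Nat.find hex, mem_Icc.2 ⟨h1, by omega⟩, fun k hk hkℓ => ?_, ?_⟩
  · by_contra hk'
    exact Nat.find_min hex hkℓ ⟨hk, by omega, hk'⟩
  · have := hne _ h1 hr
    omega

lemma hasRunBy_iff_of_ne (hne : ∀ k, 1 ≤ k → k < r → f (k + 1) ≠ f k) (hrn : r ≤ n) :
    HasRunBy r n f ↔ IsAscendingUpTo r f ∨
      ∃ ℓ ∈ Icc 1 (r - 1), HasFirstRunLength ℓ f ∧ HasRunBy r (n - ℓ) (fun k => f (k + ℓ)) := by
  constructor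
  · intro hrun
    by_cases hasc : IsAscendingUpTo r f
    · exact Or.inl hasc
    · obtain ⟨ℓ, hℓ, hfirst⟩ := exists_hasFirstRunLength hne hasc
      exact Or.inr ⟨ℓ, hℓ, hfirst, (hfirst.hasRunBy_iff (by rw [mem_Icc] at hℓ; omega)).1 hrun⟩
  · rintro (hasc | ⟨ℓ, hℓ, hfirst, hrun⟩)
    exacts [hasc.hasRunBy hrn, (hfirst.hasRunBy_iff (by rw [mem_Icc] at hℓ; omega)).2 hrun]

lemma hitEvent_eq_empty {Ω : Type*} {X : ℕ → Ω → ℕ} (h : n < r) : hitEvent X r n = ∅ :=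
  Set.eq_empty_of_forall_notMem fun _ ⟨_, hrk, hkn, _⟩ => by omega

end Paths

section Weights

noncomputable def stepWeight (m a b : ℕ) : ℝ≥0∞ :=
  if b ∈ Icc 1 m ∧ b ≠ a then (1 : ℝ≥0∞) / (m - 1) else 0

noncomputable def pathWeight (m n : ℕ) (f : ℕ → ℕ) : ℝ≥0∞ :=
  (if f 1 ∈ Icc 1 m then (1 : ℝ≥0∞) / m else 0) *
    ∏ k ∈ Icc 1 (n - 1), stepWeight m (f k) (f (k + 1))

def IsAdmissible (m n : ℕ) (f : ℕ → ℕ) : Prop :=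
  (∀ k, 1 ≤ k → k ≤ n → f k ∈ Icc 1 m) ∧ ∀ k, 1 ≤ k → k < n → f (k + 1) ≠ f k

def DependsOnFirst (n : ℕ) (Q : (ℕ → ℕ) → Prop) : Prop :=
  ∀ f g : ℕ → ℕ, (∀ k, 1 ≤ k → k ≤ n → f k = g k) → Q f → Q g

/-- The tuple `v` read as a path: `finPath v k = v (k - 1)`. -/
def finPath {n : ℕ} (v : Fin n → ℕ) (k : ℕ) : ℕ :=
  if h : k - 1 < n then v ⟨k - 1, h⟩ else 0

variable {m n d t ℓ r : ℕ} {f g : ℕ → ℕ} {P Q : (ℕ → ℕ) → Prop}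

lemma pathWeight_one : pathWeight m 1 f = if f 1 ∈ Icc 1 m then (1 : ℝ≥0∞) / m else 0 := by
  simp [pathWeight]

lemma pathWeight_succ (hn : 1 ≤ n) :
    pathWeight m (n + 1) f = pathWeight m n f * stepWeight m (f n) (f (n + 1)) := by
  obtain ⟨n, rfl⟩ : ∃ n', n = n' + 1 := ⟨n - 1, by omega⟩
  simp only [pathWeight, add_tsub_cancel_right, prod_Icc_succ_top (by omega : 1 ≤ n + 1),
    mul_assoc]

lemma pathWeight_congr (hn : 1 ≤ n) (h : ∀ k, 1 ≤ k → k ≤ n → f k = g k) :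
    pathWeight m n f = pathWeight m n g := by
  unfold pathWeight
  rw [h 1 le_rfl hn]
  congr 1
  refine prod_congr rfl fun k hk => ?_
  rw [mem_Icc] at hk
  rw [h k hk.1 (by omega), h (k + 1) (by omega) (by omega)]

lemma isAdmissible_of_pathWeight_ne_zero (h : pathWeight m n f ≠ 0) : IsAdmissible m n f := by
  induction n with
  | zero => exact ⟨fun k hk hk0 => by omega, fun k hk hk0 => by omega⟩
  | succ n ih =>
    rcases Nat.eq_zero_or_pos n with rfl | hn
    · refine ⟨fun k hk hk1 => ?_, fun k hk hk1 => by omega⟩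
      obtain rfl : k = 1 := by omega
      by_contra hf
      simp [pathWeight_one, hf] at h
    · rw [pathWeight_succ hn, mul_ne_zero_iff, stepWeight, ite_ne_right_iff] at h
      obtain ⟨hrange, hstep⟩ := ih h.1
      refine ⟨fun k hk hkn => ?_, fun k hk hkn => ?_⟩
      · rcases (show k ≤ n ∨ k = n + 1 by omega) with hkn | rfl
        exacts [hrange k hk hkn, h.2.1.1]
      · rcases (show k < n ∨ k = n by omega) with hkn | rfl
        exacts [hstep k hk hkn, h.2.1.2]

/-- The factor `m` compensates for the initial weight `1 / m` of the second piece. -/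
lemma pathWeight_add (hf : f (ℓ + 1) ∈ Icc 1 m) :
    pathWeight m (ℓ + 1 + d) f =
      m * pathWeight m (ℓ + 1) f * pathWeight m (d + 1) (fun k => f (k + ℓ)) := by
  have hm : (m : ℝ≥0∞) ≠ 0 := by simp only [mem_Icc] at hf; exact_mod_cast (by omega : m ≠ 0)
  induction d with
  | zero =>
    rw [pathWeight_one, add_comm 1 ℓ, if_pos hf, add_zero, mul_right_comm,
      ENNReal.mul_div_cancel hm (ENNReal.natCast_ne_top m), one_mul]
  | succ d ih =>
    rw [← add_assoc, pathWeight_succ (by omega), ih, pathWeight_succ (n := d + 1) (by omega),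
      mul_assoc _ (pathWeight m (d + 1) _)]
    congr 4 <;> omega

lemma DependsOnFirst.mono {n' : ℕ} (hQ : DependsOnFirst n Q) (h : n ≤ n') :
    DependsOnFirst n' Q :=
  fun f g hfg => hQ f g fun k hk hkn => hfg k hk (hkn.trans h)

lemma DependsOnFirst.and (hP : DependsOnFirst n P) (hQ : DependsOnFirst n Q) :
    DependsOnFirst n (fun f => P f ∧ Q f) :=
  fun f g hfg hf => ⟨hP f g hfg hf.1, hQ f g hfg hf.2⟩

lemma DependsOnFirst.not (hQ : DependsOnFirst n Q) : DependsOnFirst n (fun f => ¬ Q f) :=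
  fun f g hfg hf hg => hf (hQ g f (fun k hk hkn => (hfg k hk hkn).symm) hg)

lemma DependsOnFirst.shift (hQ : DependsOnFirst d Q) :
    DependsOnFirst (ℓ + d) (fun f => Q (fun k => f (k + ℓ))) :=
  fun f g hfg => hQ _ _ fun k hk hkd => hfg (k + ℓ) (by omega) (by omega)

lemma DependsOnFirst.indicator_congr (hQ : DependsOnFirst n Q) (hn : 1 ≤ n)
    (hfg : ∀ k, 1 ≤ k → k ≤ n → f k = g k) :
    {f | Q f}.indicator (pathWeight m n) f = {f | Q f}.indicator (pathWeight m n) g := by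
  have hQfg : Q f ↔ Q g := ⟨hQ f g hfg, hQ g f fun k hk hkn => (hfg k hk hkn).symm⟩
  classical
  simp only [Set.indicator_apply, Set.mem_ofPred_eq, hQfg, pathWeight_congr hn hfg]

lemma dependsOnFirst_apply {k : ℕ} (R : ℕ → Prop) (hk : 1 ≤ k) (hkn : k ≤ n) :
    DependsOnFirst n (fun f => R (f k)) := by
  intro f g hfg
  simp only [hfg k hk hkn, imp_self]

lemma dependsOnFirst_isAdmissible : DependsOnFirst n (IsAdmissible m n) := by
  rintro f g hfg ⟨hrange, hstep⟩
  refine ⟨fun k hk hkn => hfg k hk hkn ▸ hrange k hk hkn, fun k hk hkn => ?_⟩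
  rw [← hfg k hk hkn.le, ← hfg (k + 1) (by omega) hkn]
  exact hstep k hk hkn

lemma dependsOnFirst_isAscendingUpTo : DependsOnFirst t (IsAscendingUpTo t) := by
  intro f g hfg hf k hk hkt
  rw [← hfg k hk hkt.le, ← hfg (k + 1) (by omega) hkt]
  exact hf k hk hkt

lemma dependsOnFirst_hasFirstRunLength (hℓ : 1 ≤ ℓ) :
    DependsOnFirst (ℓ + 1) (HasFirstRunLength ℓ) := by
  rintro f g hfg ⟨hasc, hdesc⟩
  refine ⟨dependsOnFirst_isAscendingUpTo.mono (by omega) f g hfg hasc, ?_⟩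
  rwa [← hfg ℓ hℓ (by omega), ← hfg (ℓ + 1) (by omega) le_rfl]

lemma dependsOnFirst_hasRunBy : DependsOnFirst n (HasRunBy r n) := by
  rintro f g hfg ⟨k, hrk, hkn, hrun⟩
  refine ⟨k, hrk, hkn, fun s hs hsk => ?_⟩
  rw [← hfg s (by omega) (by omega), ← hfg (s + 1) (by omega) (by omega)]
  exact hrun s hs hsk

lemma finPath_apply (v : Fin n → ℕ) (q : Fin n) : finPath v (q + 1) = v q := by
  simp [finPath]

lemma finPath_append_of_le {a b k : ℕ} (u : Fin a → ℕ) (v : Fin b → ℕ) (hk : 1 ≤ k)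
    (hka : k ≤ a) : finPath (Fin.append u v) k = finPath u k := by
  simp [finPath, Fin.append, Fin.addCases, show k - 1 < a by omega, show k - 1 < a + b by omega]

lemma finPath_append_add {a b k : ℕ} (u : Fin a → ℕ) (v : Fin b → ℕ) (hk : 1 ≤ k) :
    finPath (Fin.append u v) (k + a) = finPath v k := by
  by_cases hkb : k - 1 < b <;>
    simp [finPath, Fin.append, Fin.addCases, hkb, show ¬ k + a - 1 < a by omega,
      show k + a - 1 - a = k - 1 by omega, show k + a - 1 < a + b ↔ k - 1 < b by omega]

lemma tsum_fin_append {a b : ℕ} (F : (Fin (a + b) → ℕ) → ℝ≥0∞) :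
    ∑' v, F v = ∑' u, ∑' w, F (Fin.append u w) := by
  rw [← (Fin.appendEquiv a b).tsum_eq, ENNReal.tsum_prod']
  rfl

lemma indicator_pathWeight_split {j : ℕ} (hj : j ∈ Icc 1 m) (f : ℕ → ℕ) :
    {f | P f ∧ f (ℓ + 1) = j ∧ Q (fun k => f (k + ℓ))}.indicator (pathWeight m (ℓ + 1 + d)) f =
      m * {f | P f ∧ f (ℓ + 1) = j}.indicator (pathWeight m (ℓ + 1)) f *
        {f | f 1 = j ∧ Q f}.indicator (pathWeight m (1 + d)) (fun k => f (k + ℓ)) := by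
  classical
  simp only [Set.indicator_apply, Set.mem_ofPred_eq]
  by_cases hPj : P f ∧ f (ℓ + 1) = j
  · have hshift : f (1 + ℓ) = j := by rw [add_comm]; exact hPj.2
    by_cases hQf : Q (fun k => f (k + ℓ))
    · simp only [hPj, hQf, hshift, and_self, if_true]
      rw [pathWeight_add (hPj.2 ▸ hj), add_comm 1 d]
    · simp [hQf]
  · simp [← and_assoc, hPj]

end Weights

section Chain

lemma setOf_eq_preimage {Ω : Type*} {X : ℕ → Ω → ℕ} {n : ℕ} {Q : (ℕ → ℕ) → Prop}
    (hQ : DependsOnFirst n Q) :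
    {ω | Q (fun k => X k ω)} = (fun ω (q : Fin n) => X (q + 1) ω) ⁻¹' {v | Q (finPath v)} := by
  ext ω
  have hagree : ∀ k, 1 ≤ k → k ≤ n → X k ω = finPath (fun q : Fin n => X (q + 1) ω) k := by
    intro k hk hkn
    simp [finPath, show k - 1 < n by omega, Nat.sub_add_cancel hk]
  exact ⟨hQ _ _ hagree, hQ _ _ fun k hk hkn => (hagree k hk hkn).symm⟩

variable {Ω : Type*} [MeasurableSpace Ω]

def HasJumpChainLaw (μ : Measure Ω) (m : ℕ) (X : ℕ → Ω → ℕ) : Prop :=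
  ∀ n, 1 ≤ n → ∀ f : ℕ → ℕ,
    μ {ω | ∀ k, 1 ≤ k → k ≤ n → X k ω = f k} = pathWeight m n f

variable {μ : Measure Ω} {m n r i : ℕ} {X : ℕ → Ω → ℕ} {P Q : (ℕ → ℕ) → Prop}

lemma measurableSet_setOf (hX : ∀ k, Measurable (X k)) (hQ : DependsOnFirst n Q) :
    MeasurableSet {ω | Q (fun k => X k ω)} := by
  rw [setOf_eq_preimage hQ]
  exact measurable_pi_lambda _ (fun q => hX _) (Set.to_countable _).measurableSet

lemma measure_setOf_eq_tsum (hX : ∀ k, Measurable (X k)) (hL : HasJumpChainLaw μ m X)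
    (hn : 1 ≤ n) (hQ : DependsOnFirst n Q) :
    μ {ω | Q (fun k => X k ω)} =
      ∑' v : Fin n → ℕ, {f | Q f}.indicator (pathWeight m n) (finPath v) := by
  set T : Ω → Fin n → ℕ := fun ω q => X (q + 1) ω
  have hT : Measurable T := measurable_pi_lambda _ fun q => hX _
  have hcyl : ∀ v, μ.map T {v} = pathWeight m n (finPath v) := by
    intro v
    rw [Measure.map_apply hT (measurableSet_singleton v), ← hL n hn]
    congr 1
    ext ω
    simp only [Set.mem_preimage, Set.mem_singleton_iff, Set.mem_ofPred_eq, funext_iff, T]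
    refine ⟨fun h k hk hkn => ?_,
      fun h q => by simpa [finPath_apply] using h (q + 1) (by omega) q.2⟩
    obtain ⟨k, rfl⟩ : ∃ k', k = k' + 1 := ⟨k - 1, by omega⟩
    simpa [finPath, show k < n by omega] using h ⟨k, by omega⟩
  rw [setOf_eq_preimage hQ, ← Measure.map_apply hT (Set.to_countable _).measurableSet,
    ← Measure.tsum_indicator_apply_singleton _ _ (Set.to_countable _).measurableSet]
  simp_rw [hcyl]
  rfl

lemma ae_isAdmissible (hX : ∀ k, Measurable (X k)) (hL : HasJumpChainLaw μ m X) (n : ℕ) :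
    ∀ᵐ ω ∂μ, IsAdmissible m n (fun k => X k ω) := by
  rcases Nat.eq_zero_or_pos n with rfl | hn
  · exact ae_of_all _ fun ω => ⟨fun k hk hk0 => by omega, fun k hk hk0 => by omega⟩
  refine ae_iff.2 ((measure_setOf_eq_tsum hX hL hn dependsOnFirst_isAdmissible.not).trans ?_)
  exact ENNReal.tsum_eq_zero.2 fun v => Set.indicator_apply_eq_zero.2
    fun hv => not_imp_comm.1 isAdmissible_of_pathWeight_ne_zero hv

lemma measure_eq_sum_measure_inter {α : Type*} [MeasurableSpace α] [MeasurableSingletonClass α]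
    {Y : Ω → α} (hY : Measurable Y) {s : Finset α} (hs : ∀ᵐ ω ∂μ, Y ω ∈ s) (E : Set Ω) :
    μ E = ∑ j ∈ s, μ (E ∩ {ω | Y ω = j}) := by
  have hfiber : ∀ j ∈ s, MeasurableSet (Y ⁻¹' {j}) := fun j _ => hY (measurableSet_singleton j)
  calc μ E = μ (E ∩ Y ⁻¹' s) := (measure_inter_conull (ae_iff.1 hs)).symm
    _ = μ.restrict E (Y ⁻¹' s) := by
        rw [Measure.restrict_apply (hY s.measurableSet), Set.inter_comm]
    _ = ∑ j ∈ s, μ (E ∩ {ω | Y ω = j}) := by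
        rw [← sum_measure_preimage_singleton s hfiber]
        refine sum_congr rfl fun j hj => ?_
        rw [Measure.restrict_apply (hfiber j hj), Set.inter_comm]
        rfl

theorem measure_markov (hX : ∀ k, Measurable (X k)) (hL : HasJumpChainLaw μ m X)
    {ℓ d j : ℕ} (hj : j ∈ Icc 1 m) (hP : DependsOnFirst (ℓ + 1) P)
    (hQ : DependsOnFirst (1 + d) Q) :
    μ {ω | P (fun k => X k ω) ∧ X (ℓ + 1) ω = j ∧ Q (fun k => X (k + ℓ) ω)} =
      m * μ {ω | P (fun k => X k ω) ∧ X (ℓ + 1) ω = j} *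
        μ {ω | X 1 ω = j ∧ Q (fun k => X k ω)} := by
  have hPj : DependsOnFirst (ℓ + 1) (fun f => P f ∧ f (ℓ + 1) = j) :=
    hP.and (dependsOnFirst_apply (· = j) (by omega) le_rfl)
  have hjQ : DependsOnFirst (1 + d) (fun f => f 1 = j ∧ Q f) :=
    (dependsOnFirst_apply (· = j) le_rfl (by omega)).and hQ
  have hPjQ : DependsOnFirst (ℓ + 1 + d)
      (fun f => P f ∧ f (ℓ + 1) = j ∧ Q (fun k => f (k + ℓ))) :=
    (hP.mono (by omega)).and ((dependsOnFirst_apply (· = j) (k := ℓ + 1) (by omega)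
      (by omega)).and (hQ.shift.mono (by omega)))
  have hhead : ∀ h : Fin d → ℕ, finPath (Fin.append (fun _ : Fin 1 => j) h) 1 = j := fun h => by
    rw [finPath_append_of_le _ h le_rfl le_rfl]
    rfl
  have hsecond : ∑' w : Fin (1 + d) → ℕ,
      {f | f 1 = j ∧ Q f}.indicator (pathWeight m (1 + d)) (finPath w) =
        ∑' h : Fin d → ℕ, {f | f 1 = j ∧ Q f}.indicator (pathWeight m (1 + d))
          (finPath (Fin.append (fun _ : Fin 1 => j) h)) := by
    rw [tsum_fin_append, tsum_eq_single (fun _ => j)]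
    intro u hu
    refine ENNReal.tsum_eq_zero.2 fun h => Set.indicator_of_notMem (fun hv => hu ?_) _
    funext q
    rw [Subsingleton.elim q 0, ← hv.1, finPath_append_of_le u h le_rfl le_rfl]
    rfl
  have hprod : ∀ {α β : Type} (c : ℝ≥0∞) (a : α → ℝ≥0∞) (b : β → ℝ≥0∞),
      c * (∑' x, a x) * ∑' y, b y = ∑' x, ∑' y, c * a x * b y := by
    intros
    simp only [ENNReal.tsum_mul_left, ENNReal.tsum_mul_right]
  rw [measure_setOf_eq_tsum hX hL (by omega) hPjQ, measure_setOf_eq_tsum hX hL (by omega) hPj,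
    measure_setOf_eq_tsum hX hL (by omega) hjQ, hsecond, tsum_fin_append, hprod]
  refine tsum_congr fun g => tsum_congr fun h => ?_
  rw [indicator_pathWeight_split hj, hPj.indicator_congr (by omega)
    fun k hk hkn => finPath_append_of_le g h hk hkn]
  by_cases hgj : finPath g (ℓ + 1) = j
  · congr 1
    refine hjQ.indicator_congr (by omega) fun k hk hkn => ?_
    rcases (show k = 1 ∨ 2 ≤ k by omega) with rfl | hk2
    · rw [show 1 + ℓ = ℓ + 1 from add_comm 1 ℓ, finPath_append_of_le g h (by omega) le_rfl, hgj,
        hhead]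
    · obtain ⟨k, rfl⟩ : ∃ k', k = k' + 1 := ⟨k - 1, by omega⟩
      rw [show k + 1 + ℓ = k + (ℓ + 1) by omega, finPath_append_add g h (by omega),
        finPath_append_add _ h (by omega)]
  · rw [Set.indicator_of_notMem fun h => hgj h.2, mul_zero, zero_mul, zero_mul]

lemma measure_X_one_eq (hL : HasJumpChainLaw μ m X) (hi : i ∈ Icc 1 m) :
    μ {ω | X 1 ω = i} = 1 / m := by
  have h := hL 1 le_rfl (fun _ => i)
  simp only [pathWeight_one, if_pos hi] at h
  rw [← h]
  congr 1
  ext ω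
  exact ⟨fun h k hk hk1 => le_antisymm hk1 hk ▸ h, fun h => h 1 le_rfl le_rfl⟩

lemma measure_X_one_X_two_eq (hL : HasJumpChainLaw μ m X) {j : ℕ} (hi : i ∈ Icc 1 m)
    (hj : j ∈ Icc 1 m) (hij : i ≠ j) :
    μ {ω | X 1 ω = i ∧ X (1 + 1) ω = j} = 1 / m * (1 / (m - 1)) := by
  have hset : {ω | X 1 ω = i ∧ X (1 + 1) ω = j} =
      {ω | ∀ k, 1 ≤ k → k ≤ 2 → X k ω = if k = 1 then i else j} := by
    ext ω
    refine ⟨fun h k hk hk2 => ?_, fun h => ⟨by simpa using h 1 le_rfl (by omega),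
      by simpa using h 2 (by omega) le_rfl⟩⟩
    rcases (show k = 1 ∨ k = 2 by omega) with rfl | rfl
    exacts [by simpa using h.1, by simpa using h.2]
  rw [hset, hL 2 (by norm_num)]
  simpa [pathWeight, stepWeight, hi, hij.symm] using mem_Icc.1 hj

lemma measure_isAscendingUpTo_inter_X_two_eq (hX : ∀ k, Measurable (X k))
    (hL : HasJumpChainLaw μ m X) (t : ℕ) {j : ℕ} (hi : i ∈ Icc 1 m) (hj : j ∈ Icc 1 m) :
    μ ({ω | X 1 ω = i ∧ IsAscendingUpTo (t + 2) (fun k => X k ω)} ∩ {ω | X 2 ω = j}) =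
      if i < j then 1 / (m - 1) * μ {ω | X 1 ω = j ∧ IsAscendingUpTo (t + 1) (fun k => X k ω)}
      else 0 := by
  split_ifs with hij
  · have hset : {ω | X 1 ω = i ∧ IsAscendingUpTo (t + 2) (fun k => X k ω)} ∩
        {ω | X 2 ω = j} = {ω | X 1 ω = i ∧ X (1 + 1) ω = j ∧
          IsAscendingUpTo (t + 1) (fun k => X (k + 1) ω)} := by
      ext ω
      simp only [Set.mem_inter_iff, Set.mem_ofPred_eq, isAscendingUpTo_add_two_iff]
      constructor
      · rintro ⟨⟨h1, -, hasc⟩, h2⟩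
        exact ⟨h1, h2, hasc⟩
      · rintro ⟨h1, h2, hasc⟩
        exact ⟨⟨h1, by rw [h1, h2]; exact hij, hasc⟩, h2⟩
    have hm : (m : ℝ≥0∞) * (1 / m) = 1 :=
      ENNReal.mul_div_cancel (by simp only [mem_Icc] at hi; exact_mod_cast (by omega : m ≠ 0))
        (ENNReal.natCast_ne_top m)
    rw [hset, measure_markov hX hL (d := t) hj
      (dependsOnFirst_apply (· = i) (k := 1) le_rfl (by omega))
      (dependsOnFirst_isAscendingUpTo.mono (by omega)), measure_X_one_X_two_eq hL hi hj hij.ne,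
      ← mul_assoc (m : ℝ≥0∞), hm, one_mul]
  · refine measure_mono_null (fun ω hω => ?_) measure_empty
    simp only [Set.mem_inter_iff, Set.mem_ofPred_eq, isAscendingUpTo_add_two_iff] at hω
    omega

lemma sum_Ioc_choose_sub (m t i : ℕ) :
    ∑ j ∈ Ioc i m, (m - j).choose t = (m - i).choose (t + 1) := by
  obtain ⟨N, hN⟩ : ∃ N, m - i = N := ⟨_, rfl⟩
  induction N generalizing i with
  | zero => rw [Ioc_eq_empty (by omega), sum_empty, hN, Nat.choose_zero_succ]
  | succ N ih =>
    rw [← Icc_add_one_left_eq_Ioc, Icc_eq_cons_Ioc (by omega), sum_cons, ih (i + 1) (by omega),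
      hN, show m - (i + 1) = N by omega, Nat.choose_succ_succ]

theorem measure_isAscendingUpTo (hX : ∀ k, Measurable (X k)) (hL : HasJumpChainLaw μ m X)
    (t : ℕ) (hi : i ∈ Icc 1 m) :
    μ {ω | X 1 ω = i ∧ IsAscendingUpTo (t + 1) (fun k => X k ω)} =
      (m - i).choose t * (1 / m * (1 / (m - 1)) ^ t) := by
  induction t generalizing i with
  | zero =>
    have hset : {ω | X 1 ω = i ∧ IsAscendingUpTo 1 (fun k => X k ω)} = {ω | X 1 ω = i} :=
      Set.ext fun ω => ⟨fun h => h.1, fun h => ⟨h, fun k hk hk1 => by omega⟩⟩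
    rw [hset, measure_X_one_eq hL hi, Nat.choose_zero_right, Nat.cast_one, pow_zero, mul_one,
      one_mul]
  | succ t ih =>
    have hX2 : ∀ᵐ ω ∂μ, X 2 ω ∈ Icc 1 m := by
      filter_upwards [ae_isAdmissible hX hL 2] with ω hω using hω.1 2 (by omega) le_rfl
    have hfilter : {j ∈ Icc 1 m | i < j} = Ioc i m := by
      ext j
      simp only [mem_filter, mem_Icc, mem_Ioc] at hi ⊢
      omega
    calc μ {ω | X 1 ω = i ∧ IsAscendingUpTo (t + 1 + 1) (fun k => X k ω)}
        _ = ∑ j ∈ Ioc i m,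
              1 / ((m : ℝ≥0∞) - 1) * ((m - j).choose t * (1 / m * (1 / (m - 1)) ^ t)) := by
          rw [measure_eq_sum_measure_inter (hX 2) hX2, ← hfilter, sum_filter]
          refine sum_congr rfl fun j hj => ?_
          rw [measure_isAscendingUpTo_inter_X_two_eq hX hL t hi hj, ih hj]
        _ = (∑ j ∈ Ioc i m, ((m - j).choose t : ℝ≥0∞)) * (1 / m * (1 / (m - 1)) ^ (t + 1)) := by
          rw [sum_mul]
          exact sum_congr rfl fun j _ => by ring
        _ = _ := by rw [← Nat.cast_sum, sum_Ioc_choose_sub]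

lemma hitEvent_inter_ae_eq (hX : ∀ k, Measurable (X k)) (hL : HasJumpChainLaw μ m X)
    (hrn : r ≤ n) :
    (hitEvent X r n ∩ {ω | X 1 ω = i} : Set Ω) =ᵐ[μ]
      ({ω | X 1 ω = i ∧ IsAscendingUpTo r (fun k => X k ω)} ∪
        ⋃ ℓ ∈ Icc 1 (r - 1), {ω | (HasFirstRunLength ℓ (fun k => X k ω) ∧ X 1 ω = i) ∧
          HasRunBy r (n - ℓ) (fun k => X (k + ℓ) ω)} : Set Ω) := by
  refine Filter.eventuallyEq_set.2 ?_
  filter_upwards [ae_isAdmissible hX hL n] with ω hω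
  have hrun := hasRunBy_iff_of_ne (f := fun k => X k ω)
    (fun k hk hkr => hω.2 k hk (by omega)) hrn
  simp only [Set.mem_inter_iff, Set.mem_union, Set.mem_iUnion, Set.mem_ofPred_eq, exists_prop]
  change HasRunBy r n _ ∧ _ ↔ _
  rw [hrun]
  tauto

lemma measure_hasFirstRunLength_hasRunBy (hX : ∀ k, Measurable (X k))
    (hL : HasJumpChainLaw μ m X) {ℓ : ℕ} (hℓ : 1 ≤ ℓ) (hℓn : ℓ < n) :
    μ {ω | (HasFirstRunLength ℓ (fun k => X k ω) ∧ X 1 ω = i) ∧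
        HasRunBy r (n - ℓ) (fun k => X (k + ℓ) ω)} =
      ∑ j ∈ Icc 1 m,
        m * μ ({ω | (∀ k, 1 ≤ k → k < ℓ → X k ω < X (k + 1) ω) ∧
              X (ℓ + 1) ω = j ∧ X (ℓ + 1) ω < X ℓ ω} ∩ {ω | X 1 ω = i}) *
          μ (hitEvent X r (n - ℓ) ∩ {ω | X 1 ω = j}) := by
  have hXℓ : ∀ᵐ ω ∂μ, X (ℓ + 1) ω ∈ Icc 1 m := by
    filter_upwards [ae_isAdmissible hX hL n] with ω hω using hω.1 _ (by omega) (by omega)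
  rw [measure_eq_sum_measure_inter (hX _) hXℓ]
  refine sum_congr rfl fun j hj => ?_
  have hmarkov := measure_markov hX hL (d := n - ℓ - 1) hj
    ((dependsOnFirst_hasFirstRunLength hℓ).and (dependsOnFirst_apply (· = i) (k := 1) le_rfl
      (by omega))) ((dependsOnFirst_hasRunBy (r := r) (n := n - ℓ)).mono (by omega))
  convert hmarkov using 3
  · ext ω
    simp only [Set.mem_inter_iff, Set.mem_ofPred_eq]
    tauto
  · congr 1
    ext ω
    simp only [HasFirstRunLength, IsAscendingUpTo, Set.mem_inter_iff, Set.mem_ofPred_eq]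
    tauto
  · exact Set.inter_comm _ _

theorem measure_hitEvent_inter (hX : ∀ k, Measurable (X k)) (hL : HasJumpChainLaw μ m X)
    (hrn : r ≤ n) :
    μ (hitEvent X r n ∩ {ω | X 1 ω = i}) =
      μ {ω | X 1 ω = i ∧ IsAscendingUpTo r (fun k => X k ω)} +
      ∑ ℓ ∈ Icc 1 (r - 1), ∑ j ∈ Icc 1 m,
        m * μ ({ω | (∀ k, 1 ≤ k → k < ℓ → X k ω < X (k + 1) ω) ∧
              X (ℓ + 1) ω = j ∧ X (ℓ + 1) ω < X ℓ ω} ∩ {ω | X 1 ω = i}) *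
          μ (hitEvent X r (n - ℓ) ∩ {ω | X 1 ω = j}) := by
  set D : ℕ → Set Ω := fun ℓ => {ω | (HasFirstRunLength ℓ (fun k => X k ω) ∧ X 1 ω = i) ∧
    HasRunBy r (n - ℓ) (fun k => X (k + ℓ) ω)}
  have hdisj : (↑(Icc 1 (r - 1)) : Set ℕ).PairwiseDisjoint D := by
    intro ℓ hℓ ℓ' hℓ' hne
    simp only [coe_Icc, Set.mem_Icc] at hℓ hℓ'
    exact Set.disjoint_left.2 fun ω h h' => hne (h.1.1.eq h'.1.1 hℓ.1 hℓ'.1)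
  have hmeas : ∀ ℓ ∈ Icc 1 (r - 1), MeasurableSet (D ℓ) := by
    intro ℓ hℓ
    rw [mem_Icc] at hℓ
    exact measurableSet_setOf hX (n := n) ((((dependsOnFirst_hasFirstRunLength hℓ.1).and
      (dependsOnFirst_apply (· = i) (k := 1) le_rfl (by omega))).mono (by omega)).and
      (dependsOnFirst_hasRunBy.shift.mono (by omega)))
  have hAD : Disjoint {ω | X 1 ω = i ∧ IsAscendingUpTo r (fun k => X k ω)}
      (⋃ ℓ ∈ Icc 1 (r - 1), D ℓ) := by
    refine Set.disjoint_iUnion₂_right.2 fun ℓ hℓ => Set.disjoint_left.2 fun ω hA hD => ?_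
    rw [mem_Icc] at hℓ
    exact hD.1.1.not_isAscendingUpTo hℓ.1 (by omega) hA.2
  rw [measure_congr (hitEvent_inter_ae_eq hX hL hrn), measure_union hAD
    (Finset.measurableSet_biUnion _ hmeas), measure_biUnion_finset hdisj hmeas]
  congr 1
  refine sum_congr rfl fun ℓ hℓ => ?_
  rw [mem_Icc] at hℓ
  exact measure_hasFirstRunLength_hasRunBy hX hL hℓ.1 (by omega)

lemma condP_X_one_eq (hL : HasJumpChainLaw μ m X) (hi : i ∈ Icc 1 m) (A : Set Ω) :
    condP μ A {ω | X 1 ω = i} = m * (μ (A ∩ {ω | X 1 ω = i})).toReal := by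
  rw [condP, measure_X_one_eq hL hi, ENNReal.toReal_div, ENNReal.toReal_one,
    ENNReal.toReal_natCast, one_div, div_inv_eq_mul, mul_comm]

lemma mul_toReal_measure_isAscendingUpTo (hX : ∀ k, Measurable (X k))
    (hL : HasJumpChainLaw μ m X) (hr : 1 ≤ r) (hi : i ∈ Icc 1 m) :
    m * (μ {ω | X 1 ω = i ∧ IsAscendingUpTo r (fun k => X k ω)}).toReal =
      if r - 1 ≤ m - i
        then (((m - i).choose (r - 1) : ℕ) : ℝ) / ((m - 1 : ℕ) : ℝ) ^ (r - 1) else 0 := by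
  have hm : (m : ℝ) ≠ 0 := by simp only [mem_Icc] at hi; exact_mod_cast (by omega : m ≠ 0)
  obtain ⟨t, rfl⟩ : ∃ t, r = t + 1 := ⟨r - 1, by omega⟩
  have hsub : (m : ℝ≥0∞) - 1 = ((m - 1 : ℕ) : ℝ≥0∞) := by rw [ENNReal.natCast_sub, Nat.cast_one]
  rw [measure_isAscendingUpTo hX hL t hi, hsub]
  simp only [ENNReal.toReal_mul, ENNReal.toReal_pow, ENNReal.toReal_div, ENNReal.toReal_one,
    ENNReal.toReal_natCast, add_tsub_cancel_right]
  split_ifs with ht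
  · field_simp
    ring
  · rw [Nat.choose_eq_zero_of_lt (by omega), Nat.cast_zero, zero_mul, mul_zero]

theorem condP_hitEvent_eq [IsFiniteMeasure μ] (hX : ∀ k, Measurable (X k))
    (hL : HasJumpChainLaw μ m X) (hi : i ∈ Icc 1 m) (hrn : r ≤ n) :
    condP μ (hitEvent X r n) {ω | X 1 ω = i} =
      m * (μ {ω | X 1 ω = i ∧ IsAscendingUpTo r (fun k => X k ω)}).toReal +
      ∑ ℓ ∈ Icc 1 (r - 1), ∑ j ∈ Icc 1 m,
        condP μ {ω | (∀ k, 1 ≤ k → k < ℓ → X k ω < X (k + 1) ω) ∧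
            X (ℓ + 1) ω = j ∧ X (ℓ + 1) ω < X ℓ ω} {ω | X 1 ω = i} *
          condP μ (hitEvent X r (n - ℓ)) {ω | X 1 ω = j} := by
  have hterm : ∀ A B : Set Ω, (m : ℝ≥0∞) * μ A * μ B ≠ ⊤ := fun A B => by finiteness
  rw [condP_X_one_eq hL hi, measure_hitEvent_inter hX hL hrn, ENNReal.toReal_add (by finiteness)
    (ENNReal.sum_ne_top.2 fun _ _ => ENNReal.sum_ne_top.2 fun _ _ => hterm _ _),
    ENNReal.toReal_sum fun _ _ => ENNReal.sum_ne_top.2 fun _ _ => hterm _ _, mul_add, mul_sum]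
  congr 1
  refine sum_congr rfl fun ℓ _ => ?_
  rw [ENNReal.toReal_sum fun _ _ => hterm _ _, mul_sum]
  refine sum_congr rfl fun j hj => ?_
  rw [condP_X_one_eq hL hi, condP_X_one_eq hL hj, ENNReal.toReal_mul, ENNReal.toReal_mul,
    ENNReal.toReal_natCast]
  ring

end Chain

end AscendingRuns

theorem hitting_time_distribution_general {Ω : Type*} [MeasurableSpace Ω] (μ : Measure Ω)
    [IsProbabilityMeasure μ] (m : ℕ) (X : ℕ → Ω → ℕ)
    (hX : ∀ k, Measurable (X k))
    (hLaw : ∀ n, 1 ≤ n → ∀ f : ℕ → ℕ,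
      μ {ω | ∀ k, 1 ≤ k → k ≤ n → X k ω = f k} =
        (if f 1 ∈ Finset.Icc 1 m then (1 : ℝ≥0∞) / m else 0) *
          ∏ k ∈ Finset.Icc 1 (n - 1),
            (if f (k + 1) ∈ Finset.Icc 1 m ∧ f (k + 1) ≠ f k then (1 : ℝ≥0∞) / (m - 1) else 0))
    (r : ℕ) (hr2 : 2 ≤ r) (i : ℕ) (hi : i ∈ Finset.Icc 1 m) (n : ℕ) :
    (1 ≤ n → n ≤ r - 1 → condP μ (hitEvent X r n) {ω | X 1 ω = i} = 0) ∧
    (r ≤ n → condP μ (hitEvent X r n) {ω | X 1 ω = i} =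
      (if r - 1 ≤ m - i
        then (((m - i).choose (r - 1) : ℕ) : ℝ) / ((m - 1 : ℕ) : ℝ) ^ (r - 1) else 0)
      + ∑ ℓ ∈ Finset.Icc 1 (r - 1), ∑ j ∈ Finset.Icc 1 m,
          condP μ {ω | (∀ k, 1 ≤ k → k < ℓ → X k ω < X (k + 1) ω) ∧
              X (ℓ + 1) ω = j ∧ X (ℓ + 1) ω < X ℓ ω} {ω | X 1 ω = i}
            * condP μ (hitEvent X r (n - ℓ)) {ω | X 1 ω = j}) := by
  refine ⟨fun _ hnr => ?_, fun hrn => ?_⟩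
  · simp [condP, AscendingRuns.hitEvent_eq_empty (X := X) (show n < r by omega)]
  · rw [AscendingRuns.condP_hitEvent_eq hX hLaw hi hrn,
      AscendingRuns.mul_toReal_measure_isAscendingUpTo hX hLaw (by omega) hi]

/-- For 2 ≤ r ≤ m, P(T_r ≤ n | X_1 = i) = 0 for 1 ≤ n ≤ r−1, and for
n ≥ r, P(T_r ≤ n | X_1 = i) = ψ_r(i) + ∑_{ℓ=1}^{r-1} ∑_{j=1}^m Φ_ℓ(i,j)·P(T_r ≤ n−ℓ | X_1 = j),
where ψ_r(i) = C(m-i,r-1)/(m-1)^{r-1}·1_{m-i ≥ r-1} and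
Φ_ℓ(i,j) = P(the first run has length ℓ and X_{ℓ+1} = j | X_1 = i). -/
theorem hitting_time_distribution {Ω : Type*} [MeasurableSpace Ω] (μ : Measure Ω)
    [IsProbabilityMeasure μ] (m : ℕ) (hm : 2 ≤ m) (X : ℕ → Ω → ℕ)
    (hX : ∀ k, Measurable (X k))
    (hLaw : ∀ n, 1 ≤ n → ∀ f : ℕ → ℕ,
      μ {ω | ∀ k, 1 ≤ k → k ≤ n → X k ω = f k} =
        (if f 1 ∈ Finset.Icc 1 m then (1 : ℝ≥0∞) / m else 0) *
          ∏ k ∈ Finset.Icc 1 (n - 1),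
            (if f (k + 1) ∈ Finset.Icc 1 m ∧ f (k + 1) ≠ f k then (1 : ℝ≥0∞) / (m - 1) else 0))
    (r : ℕ) (hr2 : 2 ≤ r) (hrm : r ≤ m) (i : ℕ) (hi : i ∈ Finset.Icc 1 m) (n : ℕ) :
    (1 ≤ n → n ≤ r - 1 → condP μ (hitEvent X r n) {ω | X 1 ω = i} = 0) ∧
    (r ≤ n → condP μ (hitEvent X r n) {ω | X 1 ω = i} =
      (if r - 1 ≤ m - i
        then (((m - i).choose (r - 1) : ℕ) : ℝ) / ((m - 1 : ℕ) : ℝ) ^ (r - 1) else 0)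
      + ∑ ℓ ∈ Finset.Icc 1 (r - 1), ∑ j ∈ Finset.Icc 1 m,
          condP μ {ω | (∀ k, 1 ≤ k → k < ℓ → X k ω < X (k + 1) ω) ∧
              X (ℓ + 1) ω = j ∧ X (ℓ + 1) ω < X ℓ ω} {ω | X 1 ω = i}
            * condP μ (hitEvent X r (n - ℓ)) {ω | X 1 ω = j}) :=
  hitting_time_distribution_general μ m X hX hLaw r hr2 i hi n
end
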